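/- For 0 ≤ x ≤ 1 and natural numbers m ≥ n ≥ 1, if y_n = (1 - x^n)^{1/n} and y_m = (1 - x^m)^{1/m}, then y_n ≤ y_m; i.e., the Fermat curves are pointwise increasing in n on [0,1]. -/
import Mathlib


theorem fermat_curves_pointwise_monotone (x : ℝ) (hx : x ∈ Set.Icc (0:ℝ) 1)
    (n m : ℕ) (hn : 1 ≤ n) (hnm : n ≤ m) :
    (1 - x ^ n) ^ ((1 : ℝ) / n) ≤ (1 - x ^ m) ^ ((1 : ℝ) / m) := by
  obtain ⟨hx0, hx1⟩ := hx
  have hn0 : n ≠ 0 := by omega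
  have hm0 : m ≠ 0 := by omega
  have hxn1 : x ^ n ≤ 1 := pow_le_one₀ hx0 hx1
  have hb0 : (0:ℝ) ≤ 1 - x ^ n := by linarith
  have hb1 : 1 - x ^ n ≤ 1 := by nlinarith [pow_nonneg hx0 n]
  set a := (1 - x ^ n) ^ ((1 : ℝ) / n) with ha
  have ha0 : 0 ≤ a := Real.rpow_nonneg hb0 _
  have ha1 : a ≤ 1 := Real.rpow_le_one hb0 hb1 (by positivity)
  have han : a ^ n = 1 - x ^ n := by
    rw [ha, ← Real.rpow_natCast _ n, ← Real.rpow_mul hb0]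
    rw [one_div, inv_mul_cancel₀ (by exact_mod_cast hn0), Real.rpow_one]
  have ham : a ^ m ≤ a ^ n := pow_le_pow_of_le_one ha0 ha1 hnm
  have hxm : x ^ m ≤ x ^ n := pow_le_pow_of_le_one hx0 hx1 hnm
  have key : a ^ m ≤ 1 - x ^ m := by linarith
  have hbm0 : (0:ℝ) ≤ 1 - x ^ m := le_trans (pow_nonneg ha0 m) key
  calc a = (a ^ m) ^ ((1:ℝ)/m) := by
            rw [← Real.rpow_natCast a m, ← Real.rpow_mul ha0, one_div,
              mul_inv_cancel₀ (by exact_mod_cast hm0), Real.rpow_one]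
    _ ≤ (1 - x ^ m) ^ ((1:ℝ)/m) :=
        Real.rpow_le_rpow (pow_nonneg ha0 m) key (by positivity)
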